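/- arXiv:1503.04045 — 4 statements merged into one kernel-verified Lean document; each statement's English description precedes it below -/
import Mathlib

section
/- Let δ : Σ → {a,b}* map each symbol α injectively to b a^{i(α)} b with i(α) ≥ 1, extended homomorphically. Then for any string S over Σ, every palindromic substring of δ(S) of the form (b a^+ b)^+ (i.e., a concatenation of blocks b a^i b) is the image δ(P) of some palindromic substring P of S. -/
/-!
In a concatenation of blocks `b a^j b` the factor `b a` occurs only at the start of a block, since
a closing `b` is followed by nothing or by an opening `b`. A factor `w = δ(Q)` of `δ(S)` whose first
exponent is positive starts with `b a`, so it is aligned with the blocks of `δ(S)`; as the blocks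
form a prefix code, `Q` is the image under `i` of a factor `P` of `S`. The blocks are palindromes,
so `w.reverse` encodes `Q.reverse`, whence `Q` is a palindrome, and so is `P` because `i` is
injective.
-/

/-- The block `b a^j b` over the binary alphabet `Bool` (`a = false`, `b = true`). -/
def blockBA (j : ℕ) : List Bool := true :: (List.replicate j false ++ [true])

/-- The block encoding of a string, sending symbol `s` to `b a^(i s) b`,
extended homomorphically. -/
def encBA {σ : Type*} (i : σ → ℕ) (w : List σ) : List Bool :=
  (w.map fun s => blockBA (i s)).flatten

namespace BlockEncoding

open List

lemma blockBA_reverse (j : ℕ) : (blockBA j).reverse = blockBA j := by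
  simp [blockBA]

lemma reverse_flatten_map_blockBA (bs : List ℕ) :
    (bs.map blockBA).flatten.reverse = (bs.reverse.map blockBA).flatten := by
  simp [reverse_flatten, map_reverse, Function.comp_def, blockBA_reverse]

lemma encBA_eq_flatten_map_blockBA {σ : Type*} (i : σ → ℕ) (S : List σ) :
    encBA i S = ((S.map i).map blockBA).flatten := by
  simp [encBA, Function.comp_def]

lemma flatten_map_blockBA_ne_false_cons (cs : List ℕ) (r : List Bool) :
    (cs.map blockBA).flatten ≠ false :: r := by
  cases cs <;> simp [blockBA]

lemma replicate_false_append_true_cons_inj {j k : ℕ} {x y : List Bool}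
    (h : replicate j false ++ true :: x = replicate k false ++ true :: y) : j = k ∧ x = y := by
  induction j generalizing k with
  | zero => cases k <;> simp_all [replicate_succ]
  | succ j ih =>
    cases k with
    | zero => simp [replicate_succ] at h
    | succ k =>
      obtain ⟨rfl, rfl⟩ := ih (by simpa [replicate_succ] using h)
      exact ⟨rfl, rfl⟩

lemma blockBA_append_inj {j k : ℕ} {x y : List Bool}
    (h : blockBA j ++ x = blockBA k ++ y) : j = k ∧ x = y :=
  replicate_false_append_true_cons_inj (by simpa [blockBA] using h)

lemma prefix_of_flatten_map_blockBA_append {bs cs : List ℕ} {t : List Bool}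
    (h : (bs.map blockBA).flatten ++ t = (cs.map blockBA).flatten) : bs <+: cs := by
  induction bs generalizing cs with
  | nil => exact nil_prefix
  | cons b bs ih =>
    cases cs with
    | nil => simp [blockBA] at h
    | cons c cs =>
      obtain ⟨rfl, h'⟩ := blockBA_append_inj (by simpa using h)
      exact cons_prefix_cons.mpr ⟨rfl, ih h'⟩

lemma eq_of_flatten_map_blockBA_eq {bs cs : List ℕ}
    (h : (bs.map blockBA).flatten = (cs.map blockBA).flatten) : bs = cs := by
  have hbc : bs <+: cs := prefix_of_flatten_map_blockBA_append (t := []) (by simpa using h)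
  have hcb : cs <+: bs := prefix_of_flatten_map_blockBA_append (t := []) (by simpa using h.symm)
  exact hbc.eq_of_length (hbc.length_le.antisymm hcb.length_le)

/-- An occurrence of `b a` that starts inside `a^k b z` runs past it, provided `z` does not
start with `a`. -/
lemma exists_eq_replicate_false_append_of_append_true_false {u r z : List Bool} {k : ℕ}
    (hz : ∀ r', z ≠ false :: r')
    (h : u ++ true :: false :: r = replicate k false ++ true :: z) :
    ∃ u', u = replicate k false ++ true :: u' ∧ u' ++ true :: false :: r = z := by
  induction k generalizing u with
  | zero =>
    cases u with
    | nil => exact absurd (cons.inj h).2.symm (hz r)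
    | cons x u =>
      obtain ⟨rfl, rfl⟩ := cons.inj h
      exact ⟨u, rfl, rfl⟩
  | succ k ih =>
    cases u with
    | nil => simp [replicate_succ] at h
    | cons x u =>
      obtain ⟨rfl, h'⟩ := cons.inj h
      obtain ⟨u', rfl, rfl⟩ := ih h'
      exact ⟨u', rfl, rfl⟩

/-- Every occurrence of `b a` in a concatenation of blocks is at a block boundary. -/
lemma exists_split_of_append_true_false {s r : List Bool} {cs : List ℕ}
    (h : s ++ true :: false :: r = (cs.map blockBA).flatten) :
    ∃ cs₁ cs₂, cs = cs₁ ++ cs₂ ∧ s = (cs₁.map blockBA).flatten ∧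
      true :: false :: r = (cs₂.map blockBA).flatten := by
  induction cs generalizing s with
  | nil => simp at h
  | cons c cs ih =>
    cases s with
    | nil => exact ⟨[], c :: cs, rfl, rfl, h⟩
    | cons x s =>
      have h' : x :: (s ++ true :: false :: r) =
          true :: (replicate c false ++ true :: (cs.map blockBA).flatten) := by
        simpa [blockBA] using h
      obtain ⟨rfl, hs⟩ := cons.inj h'
      obtain ⟨s', rfl, hs'⟩ :=
        exists_eq_replicate_false_append_of_append_true_false
          (flatten_map_blockBA_ne_false_cons cs) hs
      obtain ⟨cs₁, cs₂, rfl, rfl, h₂⟩ := ih hs'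
      exact ⟨c :: cs₁, cs₂, rfl, by simp [blockBA], h₂⟩

lemma infix_of_flatten_map_blockBA_infix {b : ℕ} {bs cs : List ℕ} (hb : 1 ≤ b)
    (h : ((b :: bs).map blockBA).flatten <:+: (cs.map blockBA).flatten) : b :: bs <:+: cs := by
  obtain ⟨s, t, hst⟩ := h
  obtain ⟨b', rfl⟩ := Nat.exists_eq_add_of_le' hb
  have hw : (((b' + 1) :: bs).map blockBA).flatten =
      true :: false :: (replicate b' false ++ true :: (bs.map blockBA).flatten) := by
    simp [blockBA, replicate_succ]
  rw [hw] at hst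
  simp only [append_assoc, cons_append] at hst
  obtain ⟨cs₁, cs₂, rfl, -, h₂⟩ := exists_split_of_append_true_false hst
  have hpre : (((b' + 1) :: bs).map blockBA).flatten ++ t = (cs₂.map blockBA).flatten := by
    rw [hw, ← h₂]
    simp
  exact (prefix_of_flatten_map_blockBA_append hpre).isInfix.trans (suffix_append _ _).isInfix

end BlockEncoding

open BlockEncoding in
theorem stmt7_general {σ : Type*} (i : σ → ℕ) (hinj : Function.Injective i)
    (S : List σ) (w : List Bool)
    (hinf : w <:+: encBA i S) (hpal : w.reverse = w)
    (hform : ∃ blocks : List ℕ, blocks ≠ [] ∧ (∀ j ∈ blocks, 1 ≤ j) ∧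
      w = (blocks.map blockBA).flatten) :
    ∃ P : List σ, P <:+: S ∧ P.reverse = P ∧ w = encBA i P := by
  obtain ⟨_ | ⟨b, bs⟩, hne, hpos, rfl⟩ := hform
  · exact absurd rfl hne
  rw [encBA_eq_flatten_map_blockBA] at hinf
  obtain ⟨P, hPS, hP⟩ := List.infix_map_iff.mp
    (infix_of_flatten_map_blockBA_infix (hpos b List.mem_cons_self) hinf)
  have hblocks : (b :: bs).reverse = b :: bs :=
    eq_of_flatten_map_blockBA_eq ((reverse_flatten_map_blockBA _).symm.trans hpal)
  refine ⟨P, hPS, List.map_injective_iff.mpr hinj ?_, by rw [encBA_eq_flatten_map_blockBA, ← hP]⟩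
  rw [List.map_reverse, ← hP, hblocks]

/-- Every palindromic substring of `δ(S)` of the form `(b a^+ b)^+` is the image under
`δ` of a palindromic substring of `S`. -/
theorem stmt7 {σ : Type*} (i : σ → ℕ) (hinj : Function.Injective i)
    (hpos : ∀ s, 1 ≤ i s) (S : List σ) (w : List Bool)
    (hinf : w <:+: encBA i S) (hpal : w.reverse = w)
    (hform : ∃ blocks : List ℕ, blocks ≠ [] ∧ (∀ j ∈ blocks, 1 ≤ j) ∧
      w = (blocks.map blockBA).flatten) :
    ∃ P : List σ, P <:+: S ∧ P.reverse = P ∧ w = encBA i P :=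
  stmt7_general i hinj S w hinf hpal hform
end

section
/- Let δ : Σ → {a,b}* map each symbol injectively to b a^i b (i ≥ 1), extended homomorphically. For any string S over Σ, every diverse palindromic factorization of δ(S) consists entirely of images δ(P) of palindromes P, i.e., it is obtained by applying δ factorwise to a diverse palindromic factorization of S. -/
/-- `F` is a diverse palindromic factorization of `S`. -/
def DivPalFact {α : Type*} (S : List α) (F : List (List α)) : Prop :=
  F.flatten = S ∧ (∀ f ∈ F, f ≠ [] ∧ f.reverse = f) ∧ F.Nodup

/-!
Read `δ(S)` from left to right along the factorization. A palindromic factor that starts at a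
block boundary begins with `b`, so it also ends with `b`; as a nonempty image `δ(P)` begins with
`ba` and ends with `ab` (this is where `i ≥ 1` enters), such a factor is either a whole image
`δ(P)` or the single letter `b`. A palindromic factor starting inside a block, at a suffix
`a^q b δ(R)`, is either `b` or ends inside a block again. So once a factor `b` leaves the block
boundaries, the factorization never returns to them and has to use `b` a second time, which
diversity forbids. Hence every factor is some `δ(P)`, and injectivity of `δ` makes each `P` a
palindrome and the `P`s pairwise distinct.
-/

open List

section

variable {σ : Type*} (i : σ → ℕ)

@[simp]
lemma encBA_nil : encBA i [] = [] := rfl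

@[simp]
lemma encBA_cons (s : σ) (w : List σ) :
    encBA i (s :: w) = true :: (replicate (i s) false ++ true :: encBA i w) := by
  simp [encBA, blockBA]

@[simp]
lemma encBA_append (u v : List σ) : encBA i (u ++ v) = encBA i u ++ encBA i v := by
  simp [encBA]

lemma encBA_reverse (w : List σ) : (encBA i w).reverse = encBA i w.reverse := by
  induction w with
  | nil => rfl
  | cons s w ih => simp [ih]

lemma encBA_eq_true_false_cons (hpos : ∀ s, 1 ≤ i s) {w : List σ} (hw : w ≠ []) :
    ∃ X, encBA i w = true :: false :: X := by
  obtain ⟨s, w, rfl⟩ := exists_cons_of_ne_nil hw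
  obtain ⟨k, hk⟩ := Nat.exists_eq_add_of_le' (hpos s)
  exact ⟨_, by rw [encBA_cons, hk, replicate_succ, cons_append]⟩

lemma replicate_false_append_true_cons_inj {a b : ℕ} {X Y : List Bool}
    (h : replicate a false ++ true :: X = replicate b false ++ true :: Y) : a = b ∧ X = Y := by
  induction a generalizing b with
  | zero => cases b <;> simp_all [replicate_succ]
  | succ a ih =>
    cases b with
    | zero => simp [replicate_succ] at h
    | succ b =>
      obtain ⟨rfl, rfl⟩ := ih (by simpa [replicate_succ] using h)
      exact ⟨rfl, rfl⟩

lemma eq_zero_of_replicate_false_append_eq_true_cons {t : ℕ} {X Y : List Bool}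
    (h : replicate t false ++ true :: X = true :: Y) : t = 0 := by
  cases t <;> simp_all [replicate_succ]

lemma encBA_injective (hinj : Function.Injective i) : Function.Injective (encBA i) := by
  intro u v h
  induction u generalizing v with
  | nil => cases v <;> simp_all
  | cons s u ih =>
    cases v with
    | nil => simp at h
    | cons t v =>
      obtain ⟨hst, huv⟩ := replicate_false_append_true_cons_inj (by simpa using h)
      rw [hinj hst, ih huv]

lemma append_eq_blockBA {j : ℕ} {u v : List Bool} (h : u ++ v = blockBA j) (hv : v ≠ []) :
    u = [] ∨ ∃ t q, u = true :: replicate t false ∧ v = replicate q false ++ [true] := by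
  rcases u with _ | ⟨x, u⟩
  · exact Or.inl rfl
  right
  simp only [blockBA, cons_append, cons.injEq] at h
  obtain ⟨rfl, h⟩ := h
  rcases append_eq_append_iff.mp h with ⟨w, hw, rfl⟩ | ⟨w, rfl, hw⟩
  · obtain ⟨-, hu, hw⟩ := replicate_eq_append_iff.mp hw
    exact ⟨u.length, w.length, by rw [← hu], by rw [← hw]⟩
  · obtain ⟨rfl, rfl⟩ : w = [] ∧ v = [true] := by
      rcases w with _ | ⟨y, w⟩ <;> simp_all
    exact ⟨j, 0, by simp, rfl⟩

lemma append_eq_encBA {R : List σ} {f T : List Bool} (h : f ++ T = encBA i R) :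
    (∃ P R', R = P ++ R' ∧ f = encBA i P ∧ T = encBA i R') ∨
    ∃ P t q R', f = encBA i P ++ true :: replicate t false ∧
      T = replicate q false ++ true :: encBA i R' := by
  rcases append_eq_flatten_iff.mp h with ⟨as, bs, hR, rfl, rfl⟩ |
    ⟨as, bs, c, cs, ds, hR, rfl, rfl⟩
  · obtain ⟨P, R', rfl, rfl, rfl⟩ := map_eq_append_iff.mp hR
    exact Or.inl ⟨P, R', rfl, rfl, rfl⟩
  · obtain ⟨P, L, rfl, rfl, hL⟩ := map_eq_append_iff.mp hR
    obtain ⟨s, R', rfl, hs, rfl⟩ := map_eq_cons_iff.mp hL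
    rcases append_eq_blockBA hs.symm (cons_ne_nil c cs) with rfl | ⟨t, q, rfl, hv⟩
    · exact Or.inl ⟨P, s :: R', rfl, append_nil _, by simp [encBA, hs]⟩
    · exact Or.inr ⟨P, t, q, R', rfl, by rw [hv]; simp [encBA]⟩

end

section

variable {σ : Type*} (i : σ → ℕ) (hpos : ∀ s, 1 ≤ i s)
include hpos

lemma palindrome_prefix_encBA {R : List σ} {f T : List Bool} (h : f ++ T = encBA i R)
    (hpal : f.reverse = f) :
    (f = [true] ∧ ∃ q R', T = replicate q false ++ true :: encBA i R') ∨
    ∃ P R', R = P ++ R' ∧ f = encBA i P ∧ T = encBA i R' := by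
  rcases append_eq_encBA i h with hsplit | ⟨P, t, q, R', rfl, hT⟩
  · exact Or.inr hsplit
  refine Or.inl ⟨?_, q, R', hT⟩
  rcases eq_or_ne P [] with rfl | hP
  · simp only [encBA_nil, nil_append, reverse_cons, reverse_replicate] at hpal ⊢
    rw [eq_zero_of_replicate_false_append_eq_true_cons hpal, replicate_zero]
  · -- `f` begins with `ba`, its reverse with `a^t bb`.
    obtain ⟨X, hX⟩ := encBA_eq_true_false_cons i hpos hP
    obtain ⟨Y, hY⟩ := encBA_eq_true_false_cons i hpos (reverse_ne_nil_iff.mpr hP)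
    rw [reverse_append, encBA_reverse, hY, hX] at hpal
    simp only [reverse_cons, reverse_replicate, append_assoc, cons_append] at hpal
    obtain rfl := eq_zero_of_replicate_false_append_eq_true_cons hpal
    simp at hpal

lemma palindrome_prefix_replicate_false_encBA {q : ℕ} {R : List σ} {f T : List Bool}
    (h : f ++ T = replicate q false ++ true :: encBA i R) (hpal : f.reverse = f) :
    f = [true] ∨ ∃ q' R', T = replicate q' false ++ true :: encBA i R' := by
  rcases append_eq_append_iff.mp h with ⟨w, hw, rfl⟩ | ⟨w, rfl, hw⟩
  · obtain ⟨-, -, hw⟩ := replicate_eq_append_iff.mp hw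
    exact Or.inr ⟨w.length, R, by rw [← hw]⟩
  rcases w with _ | ⟨x, w⟩
  · exact Or.inr ⟨0, R, hw.symm⟩
  simp only [cons_append, cons.injEq] at hw
  obtain ⟨rfl, hw⟩ := hw
  rcases append_eq_encBA i hw.symm with ⟨P, R', -, rfl, -⟩ | ⟨-, t, q', R', -, hT⟩
  · left
    rcases eq_or_ne P [] with rfl | hP
    · simp only [encBA_nil, reverse_append, reverse_cons, reverse_nil, reverse_replicate,
        nil_append, singleton_append] at hpal
      rw [eq_zero_of_replicate_false_append_eq_true_cons hpal.symm]
      rfl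
    · -- `f` begins with `a^q bb`, its reverse with `ba`.
      exfalso
      obtain ⟨X, hX⟩ := encBA_eq_true_false_cons i hpos hP
      obtain ⟨Y, hY⟩ := encBA_eq_true_false_cons i hpos (reverse_ne_nil_iff.mpr hP)
      rw [reverse_append, reverse_cons, encBA_reverse, hY, hX] at hpal
      simp only [reverse_replicate, append_assoc, cons_append] at hpal
      obtain rfl := eq_zero_of_replicate_false_append_eq_true_cons hpal.symm
      simp at hpal
  · exact Or.inr ⟨q', R', hT⟩

lemma singleton_true_mem_of_flatten_eq {F : List (List Bool)} (hF : ∀ f ∈ F, f.reverse = f)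
    {q : ℕ} {R : List σ} (h : F.flatten = replicate q false ++ true :: encBA i R) :
    [true] ∈ F := by
  induction F generalizing q R with
  | nil => simp at h
  | cons f F ih =>
    rw [flatten_cons] at h
    rcases palindrome_prefix_replicate_false_encBA i hpos h (hF f mem_cons_self) with
      rfl | ⟨q', R', hT⟩
    · exact mem_cons_self
    · exact mem_cons_of_mem _ (ih (fun g hg => hF g (mem_cons_of_mem _ hg)) hT)

lemma exists_eq_map_encBA_of_flatten_eq {F : List (List Bool)} (hF : ∀ f ∈ F, f.reverse = f)
    (hnd : F.Nodup) {S : List σ} (h : F.flatten = encBA i S) :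
    ∃ G : List (List σ), G.flatten = S ∧ F = G.map (encBA i) := by
  induction F generalizing S with
  | nil => exact ⟨[], by cases S <;> simp_all, rfl⟩
  | cons f F ih =>
    rw [flatten_cons] at h
    rw [nodup_cons] at hnd
    have hF' : ∀ g ∈ F, g.reverse = g := fun g hg => hF g (mem_cons_of_mem _ hg)
    rcases palindrome_prefix_encBA i hpos h (hF f mem_cons_self) with
      ⟨rfl, q, R, hT⟩ | ⟨P, S', rfl, rfl, hT⟩
    · exact absurd (singleton_true_mem_of_flatten_eq i hpos hF' hT) hnd.1
    · obtain ⟨G, rfl, rfl⟩ := ih hF' hnd.2 hT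
      exact ⟨P :: G, rfl, rfl⟩

end

/-- Every diverse palindromic factorization of `δ(S)` is obtained by applying `δ`
factorwise to a diverse palindromic factorization of `S`. -/
theorem stmt8 {σ : Type*} (i : σ → ℕ) (hinj : Function.Injective i)
    (hpos : ∀ s, 1 ≤ i s) (S : List σ) (F : List (List Bool))
    (hF : DivPalFact (encBA i S) F) :
    ∃ G : List (List σ), DivPalFact S G ∧ F = G.map (encBA i) := by
  obtain ⟨hflat, hpal, hnd⟩ := hF
  obtain ⟨G, rfl, rfl⟩ := exists_eq_map_encBA_of_flatten_eq i hpos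
    (fun f hf => (hpal f hf).2) hnd hflat
  refine ⟨G, ⟨rfl, fun g hg => ?_, hnd.of_map _⟩, rfl⟩
  obtain ⟨hne, hrev⟩ := hpal _ (mem_map_of_mem hg)
  refine ⟨fun hg => hne (by rw [hg, encBA_nil]), encBA_injective i hinj ?_⟩
  rw [← encBA_reverse, hrev]
end

section
/- The only nonempty palindromic substrings of any prefix of the infinite periodic string (abbaab)^ω of length at least 20 over {a,b} are exactly: a, b, aa, bb, aba, bab, abba, baab. -/
/-!
A palindrome of length at least 5 contains, by peeling off equal end letters, a palindrome of
length 5 or 6, and every factor of length at most 6 of `(abbaab)^ω` already occurs in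
`abbaab abbaab`. A finite check shows that this word has no palindromic factor of length 5 or 6
and that its nonempty palindromic factors are exactly the eight listed ones; the prefix of
length 12 of the given word is `abbaab abbaab`, so all eight occur.
-/

namespace List

variable {α : Type*}

theorem Palindrome.exists_infix_palindrome_length_eq {l : List α} (hl : l.Palindrome) {k : ℕ}
    (hk : k ≤ l.length) :
    ∃ q, q <:+: l ∧ q.Palindrome ∧ (q.length = k ∨ q.length = k + 1) := by
  induction hl with
  | nil => exact ⟨[], infix_refl _, .nil, by simp_all⟩
  | singleton x => exact ⟨[x], infix_refl _, .singleton x, by simp at hk ⊢; omega⟩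
  | @cons_concat x m hm ih =>
    by_cases hmk : k ≤ m.length
    · obtain ⟨q, hqm, hq, hqk⟩ := ih hmk
      exact ⟨q, hqm.trans ⟨[x], [x], rfl⟩, hq, hqk⟩
    · exact ⟨_, infix_refl _, hm.cons_concat x, by simp at hk ⊢; omega⟩

theorem append_self_prefix_flatten_replicate {u : List α} {n : ℕ} (hn : 2 ≤ n) :
    u ++ u <+: (replicate n u).flatten := by
  obtain ⟨k, rfl⟩ := Nat.exists_eq_add_of_le' hn
  exact ⟨(replicate k u).flatten, by simp [replicate_succ]⟩

theorem infix_append_self_of_infix_flatten_replicate {u q : List α} :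
    ∀ {n : ℕ}, q <:+: (replicate n u).flatten → q.length ≤ u.length → q <:+: u ++ u
  | 0, hq, _ => by simp_all
  | 1, hq, _ => (by simpa using hq : q <:+: u).trans (infix_append [] u u)
  | n + 2, hq, hlen => by
    rw [replicate_succ, flatten_cons] at hq
    obtain ⟨s, t, hst⟩ := hq
    rw [append_assoc, append_eq_append_iff] at hst
    rcases hst with ⟨a, hu, hqt⟩ | ⟨c, rfl, hrest⟩
    · have hqa : q <+: a ++ u :=
        prefix_of_prefix_length_le ⟨t, hqt⟩ (by simp [replicate_succ]) (by simp; omega)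
      exact hqa.isInfix.trans ⟨s, [], by rw [hu]; simp⟩
    · exact infix_append_self_of_infix_flatten_replicate ⟨c, t, by simpa using hrest.symm⟩ hlen

theorem infix_iff_mem_flatMap_tails_inits {q l : List α} :
    q <:+: l ↔ q ∈ l.tails.flatMap inits := by
  simp only [infix_iff_prefix_suffix, mem_flatMap, mem_tails, mem_inits]
  exact exists_congr fun _ => and_comm

end List

open List

abbrev abbaab : List Bool := [false, true, true, false, false, true]

abbrev abbaabPalindromes : List (List Bool) :=
  [[false], [true], [false, false], [true, true], [false, true, false], [true, false, true],
    [false, true, true, false], [true, false, false, true]]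

theorem length_le_four_of_palindrome_infix_abbaab_sq {q : List Bool}
    (hq : q <:+: abbaab ++ abbaab) (hpal : q.reverse = q) : q.length ≤ 4 := by
  have hcheck : ∀ q ∈ (abbaab ++ abbaab).tails.flatMap inits, q.reverse = q → q.length ≤ 4 := by
    decide
  exact hcheck q (infix_iff_mem_flatMap_tails_inits.mp hq) hpal

theorem palindrome_infix_abbaab_sq_iff {q : List Bool} :
    (q ≠ [] ∧ q.reverse = q ∧ q <:+: abbaab ++ abbaab) ↔ q ∈ abbaabPalindromes := by
  rw [infix_iff_mem_flatMap_tails_inits]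
  have hcheck : ∀ q ∈ (abbaab ++ abbaab).tails.flatMap inits,
      q ≠ [] → q.reverse = q → q ∈ abbaabPalindromes := by
    decide
  have hlisted : ∀ q ∈ abbaabPalindromes,
      q ≠ [] ∧ q.reverse = q ∧ q ∈ (abbaab ++ abbaab).tails.flatMap inits := by
    decide
  exact ⟨fun ⟨hne, hpal, hq⟩ => hcheck q hq hne hpal, hlisted q⟩

/-- Over `Bool` with `a = false`, `b = true`: the only nonempty palindromic substrings
of any prefix of `(abbaab)^ω` of length at least 20 are exactly
`a, b, aa, bb, aba, bab, abba, baab`. -/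
theorem stmt11 (W : List Bool) (n : ℕ)
    (hpre : W <+: (List.replicate n [false, true, true, false, false, true]).flatten)
    (hlen : 20 ≤ W.length) :
    ∀ p : List Bool,
      (p ≠ [] ∧ p.reverse = p ∧ p <:+: W) ↔
        p ∈ [[false], [true], [false, false], [true, true],
             [false, true, false], [true, false, true],
             [false, true, true, false], [true, false, false, true]] := by
  have hn : 2 ≤ n := by
    have := hpre.length_le
    simp at this
    omega
  have hsq : abbaab ++ abbaab <+: W :=
    prefix_of_prefix_length_le (append_self_prefix_flatten_replicate hn) hpre (by simp; omega)
  have hshort : ∀ q, q <:+: W → q.length ≤ 6 → q <:+: abbaab ++ abbaab :=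
    fun q hq => infix_append_self_of_infix_flatten_replicate (hq.trans hpre.isInfix)
  intro p
  rw [← palindrome_infix_abbaab_sq_iff]
  refine ⟨fun ⟨hne, hpal, hp⟩ => ⟨hne, hpal, hshort p hp ?_⟩,
    fun ⟨hne, hpal, hp⟩ => ⟨hne, hpal, hp.trans hsq.isInfix⟩⟩
  by_contra! hp6
  obtain ⟨q, hqp, hq, hqlen⟩ :=
    (Palindrome.of_reverse_eq hpal).exists_infix_palindrome_length_eq (k := 5) (by omega)
  have hq4 := length_le_four_of_palindrome_infix_abbaab_sq (hshort q (hqp.trans hp) (by omega))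
    hq.reverse_eq
  omega
end

section
/- For any string S over alphabet Σ and fresh distinct symbols $, # ∉ Σ, and a distinguished symbol a with companion symbols ā and x_a: the string S · $ · # · x_a a x_a ā x_a has a diverse palindromic factorization if and only if S has one; moreover every diverse palindromic factorization of the extended string ends with either ($, #, x_a, a, x_a ā x_a) or ($, #, x_a a x_a, ā, x_a), provided x_a, a, ā do not occur in S. -/
namespace DivPalFact

variable {α : Type*} {S T : List α} {F G : List (List α)}

theorem of_sublist (hF : DivPalFact S F) (hG : G.Sublist F) : DivPalFact G.flatten G :=
  ⟨rfl, fun f hf => hF.2.1 f (hG.subset hf), hF.2.2.sublist hG⟩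

theorem eq_nil (hF : DivPalFact [] F) : F = [] :=
  List.eq_nil_iff_forall_not_mem.2 fun f hf =>
    (hF.2.1 f hf).1 (List.flatten_eq_nil_iff.1 hF.1 f hf)

theorem append (hG : DivPalFact S G) (hF : DivPalFact T F)
    (hfresh : ∀ f ∈ F, ∃ y ∈ f, y ∉ S) : DivPalFact (S ++ T) (G ++ F) := by
  obtain ⟨rfl, hGpal, hGnd⟩ := hG
  obtain ⟨rfl, hFpal, hFnd⟩ := hF
  refine ⟨List.flatten_append, fun f hf => ?_, List.nodup_append.2 ⟨hGnd, hFnd, ?_⟩⟩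
  · rcases List.mem_append.1 hf with hf | hf
    exacts [hGpal f hf, hFpal f hf]
  · rintro g hg f hf rfl
    obtain ⟨y, hy, hyS⟩ := hfresh g hf
    exact hyS (List.mem_flatten.2 ⟨g, hg, hy⟩)

/-- A letter occurring exactly once lies at the centre of its factor. -/
theorem exists_center {c : α} (hF : DivPalFact (S ++ c :: T) F) (hS : c ∉ S) (hT : c ∉ T) :
    ∃ F₁ u F₂, F = F₁ ++ (u ++ c :: u.reverse) :: F₂ ∧
      S = F₁.flatten ++ u ∧ T = u.reverse ++ F₂.flatten ∧
      DivPalFact F₁.flatten F₁ ∧ DivPalFact F₂.flatten F₂ := by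
  obtain ⟨f, hfF, hcf⟩ :=
    List.mem_flatten.1 (hF.1 ▸ List.mem_append_right S List.mem_cons_self)
  obtain ⟨F₁, F₂, rfl⟩ := List.append_of_mem hfF
  obtain ⟨u, v, rfl⟩ := List.append_of_mem hcf
  have hsplit : S ++ c :: T = (F₁.flatten ++ u) ++ c :: (v ++ F₂.flatten) := by
    rw [← hF.1]; simp
  obtain ⟨hSeq, -, hTeq⟩ := (List.append_cons_inj_of_notMem hS hT).1 hsplit
  have hu : c ∉ u := fun h => hS (hSeq ▸ List.mem_append_right _ h)
  have hv : c ∉ v := fun h => hT (hTeq ▸ List.mem_append_left _ h)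
  have hpal : u ++ c :: v = v.reverse ++ c :: u.reverse := by
    simpa using ((hF.2.1 (u ++ c :: v) (by simp)).2).symm
  obtain ⟨rfl, -, -⟩ := (List.append_cons_inj_of_notMem hu hv).1 hpal
  refine ⟨F₁, v.reverse, F₂, by simp, hSeq, by simpa using hTeq, ?_, ?_⟩
  · exact hF.of_sublist (List.sublist_append_left _ _)
  · exact hF.of_sublist ((List.sublist_cons_self _ _).trans (List.sublist_append_right _ _))

theorem exists_eq_singleton_cons {c : α} (hF : DivPalFact (c :: T) F) (hT : c ∉ T) :
    ∃ F', F = [c] :: F' ∧ DivPalFact T F' := by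
  obtain ⟨F₁, u, F₂, rfl, hS, rfl, h₁, h₂⟩ :=
    exists_center (S := []) hF List.not_mem_nil hT
  obtain ⟨hF₁, rfl⟩ := List.append_eq_nil_iff.1 hS.symm
  rw [hF₁] at h₁
  rw [h₁.eq_nil]
  exact ⟨F₂, rfl, by simpa using h₂⟩

/-- The factor centred at `c` cannot extend, since the mirror image of `d` would lie in `S`. -/
theorem exists_eq_append_singleton_cons {c d : α} (hF : DivPalFact (S ++ c :: d :: T) F)
    (hcS : c ∉ S) (hcT : c ∉ d :: T) (hdS : d ∉ S) :
    ∃ F₁ F₂, F = F₁ ++ [c] :: F₂ ∧ DivPalFact S F₁ ∧ DivPalFact (d :: T) F₂ := by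
  obtain ⟨F₁, u, F₂, rfl, rfl, hT, h₁, h₂⟩ := hF.exists_center hcS hcT
  obtain rfl : u = [] := by
    rcases List.append_eq_cons_iff.1 hT.symm with ⟨hu, -⟩ | ⟨w, hu, -⟩
    · exact List.reverse_eq_nil_iff.1 hu
    · exact absurd (List.mem_append_right _ (List.mem_reverse.1 (hu ▸ List.mem_cons_self))) hdS
  exact ⟨F₁, F₂, rfl, by simpa using h₁, by simpa [hT] using h₂⟩

theorem eq_singleton {x : α} (hF : DivPalFact [x] F) : F = [[x]] := by
  obtain ⟨F', rfl, h⟩ := exists_eq_singleton_cons hF List.not_mem_nil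
  rw [h.eq_nil]

theorem eq_of_b_x {b x : α} (hbx : b ≠ x) (hF : DivPalFact [b, x] F) : F = [[b], [x]] := by
  obtain ⟨F', rfl, h⟩ := exists_eq_singleton_cons hF (by simpa using hbx)
  rw [h.eq_singleton]

theorem eq_of_x_b_x {x b : α} (hxb : x ≠ b) (hF : DivPalFact [x, b, x] F) :
    F = [[x, b, x]] := by
  obtain ⟨F₁, u, F₂, rfl, hS, hT, h₁, h₂⟩ :=
    exists_center (S := [x]) (T := [x]) hF (by simpa using hxb.symm) (by simpa using hxb.symm)
  rcases List.append_eq_singleton_iff.1 hS.symm with ⟨hF₁, rfl⟩ | ⟨hF₁, rfl⟩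
  · rw [hF₁] at h₁
    have hF₂ : F₂.flatten = [] := by simpa using hT
    rw [hF₂] at h₂
    rw [h₁.eq_nil, h₂.eq_nil]
    rfl
  · rw [hF₁] at h₁
    have hF₂ : F₂.flatten = [x] := by simpa using hT.symm
    rw [hF₂] at h₂
    rw [h₁.eq_singleton, h₂.eq_singleton] at hF
    simp [DivPalFact] at hF

theorem eq_of_x_a_x_b_x {x a b : α} (hxa : x ≠ a) (hxb : x ≠ b) (hab : a ≠ b)
    (hF : DivPalFact [x, a, x, b, x] F) :
    F = [[x], [a], [x, b, x]] ∨ F = [[x, a, x], [b], [x]] := by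
  obtain ⟨F₁, u, F₂, rfl, hS, hT, h₁, h₂⟩ := exists_center (S := [x]) (T := [x, b, x])
    hF (by simpa using hxa.symm) (by simp [hxa.symm, hab])
  rcases List.append_eq_singleton_iff.1 hS.symm with ⟨hF₁, rfl⟩ | ⟨hF₁, rfl⟩
  · rw [hF₁] at h₁
    have hF₂ : F₂.flatten = [b, x] := by simpa using hT.symm
    rw [hF₂] at h₂
    right
    rw [h₁.eq_nil, eq_of_b_x hxb.symm h₂]
    rfl
  · rw [hF₁] at h₁
    have hF₂ : F₂.flatten = [x, b, x] := by simpa using hT.symm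
    rw [hF₂] at h₂
    left
    rw [h₁.eq_singleton, eq_of_x_b_x hxb h₂]
    rfl

theorem exists_eq_append_of_append_gadget {dol hash xa a ab : α}
    (hdist : [dol, hash, xa, a, ab].Nodup) (hd : dol ∉ S) (hh : hash ∉ S)
    (hF : DivPalFact (S ++ [dol, hash, xa, a, xa, ab, xa]) F) :
    ∃ G, DivPalFact S G ∧
      (F = G ++ [[dol], [hash], [xa], [a], [xa, ab, xa]] ∨
       F = G ++ [[dol], [hash], [xa, a, xa], [ab], [xa]]) := by
  simp only [List.nodup_cons, List.mem_cons, List.not_mem_nil, or_false, not_or,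
    List.nodup_nil, and_true] at hdist
  obtain ⟨⟨hdh, hdx, hda, hdab⟩, ⟨hhx, hha, hhab⟩, ⟨hxa, hxab⟩, haab, -⟩ := hdist
  obtain ⟨G, F₂, rfl, hG, h₂⟩ :=
    hF.exists_eq_append_singleton_cons hd (by simp [hdh, hdx, hda, hdab]) hh
  obtain ⟨F₃, rfl, h₃⟩ := h₂.exists_eq_singleton_cons (by simp [hhx, hha, hhab])
  refine ⟨G, hG, ?_⟩
  rcases h₃.eq_of_x_a_x_b_x hxa hxab haab with rfl | rfl <;> simp

end DivPalFact

theorem stmt18_general {α : Type*} (S : List α) (dol hash xa a ab : α)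
    (hdist : List.Nodup [dol, hash, xa, a, ab])
    (hd : dol ∉ S) (hh : hash ∉ S) (hx : xa ∉ S) (ha : a ∉ S) :
    ((∃ F : List (List α),
        DivPalFact (S ++ [dol, hash, xa, a, xa, ab, xa]) F) ↔
      (∃ G : List (List α), DivPalFact S G)) ∧
    (∀ F : List (List α),
      DivPalFact (S ++ [dol, hash, xa, a, xa, ab, xa]) F →
        ∃ G : List (List α),
          F = G ++ [[dol], [hash], [xa], [a], [xa, ab, xa]] ∨
          F = G ++ [[dol], [hash], [xa, a, xa], [ab], [xa]]) := by
  refine ⟨⟨fun ⟨F, hF⟩ => ?_, fun ⟨G, hG⟩ => ?_⟩, fun F hF => ?_⟩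
  · obtain ⟨G, hG, -⟩ := hF.exists_eq_append_of_append_gadget hdist hd hh
    exact ⟨G, hG⟩
  · have hgadget : DivPalFact [dol, hash, xa, a, xa, ab, xa]
        [[dol], [hash], [xa], [a], [xa, ab, xa]] := by
      simp only [List.nodup_cons, List.mem_cons, List.not_mem_nil, or_false, not_or] at hdist
      exact ⟨rfl, by simp, by simp [hdist]⟩
    exact ⟨_, hG.append hgadget (by simp [hd, hh, hx, ha])⟩
  · obtain ⟨G, -, hG⟩ := hF.exists_eq_append_of_append_gadget hdist hd hh
    exact ⟨G, hG⟩

/-- For fresh pairwise distinct symbols `$`, `#`, `x_a`, `a`, `ā` not occurring in `S`,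
the string `S · $ · # · x_a a x_a ā x_a` has a diverse palindromic factorization iff `S`
has one, and every diverse palindromic factorization of the extended string ends with
`($, #, x_a, a, x_a ā x_a)` or `($, #, x_a a x_a, ā, x_a)`. -/
theorem stmt18 {α : Type*} (S : List α) (dol hash xa a ab : α)
    (hdist : List.Nodup [dol, hash, xa, a, ab])
    (hd : dol ∉ S) (hh : hash ∉ S) (hx : xa ∉ S) (ha : a ∉ S) (hab : ab ∉ S) :
    ((∃ F : List (List α),
        DivPalFact (S ++ [dol, hash, xa, a, xa, ab, xa]) F) ↔
      (∃ G : List (List α), DivPalFact S G)) ∧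
    (∀ F : List (List α),
      DivPalFact (S ++ [dol, hash, xa, a, xa, ab, xa]) F →
        ∃ G : List (List α),
          F = G ++ [[dol], [hash], [xa], [a], [xa, ab, xa]] ∨
          F = G ++ [[dol], [hash], [xa, a, xa], [ab], [xa]]) :=
  stmt18_general S dol hash xa a ab hdist hd hh hx ha
end
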